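/- For every fixed even integer k ≥ 2 and every n ∈ ℕ, there exists a graph G with tree-independence number 1 (hence layered tree-independence number at most 1) such that the layered tree-independence number of the k-th power G^k is at least n. -/

import Mathlib

open Classical

/-- A tree decomposition of a graph `G`. -/
structure TreeDecomp {V : Type*} (G : SimpleGraph V) where
  ι : Type
  fin : Fintype ι
  T : SimpleGraph ι
  isTree : T.IsTree
  bag : ι → Set V
  mem_bag : ∀ v : V, ∃ t, v ∈ bag t
  edge_bag : ∀ ⦃u v : V⦄, G.Adj u v → ∃ t, u ∈ bag t ∧ v ∈ bag t
  bag_connected : ∀ v : V, (T.induce {t | v ∈ bag t}).Connected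

/-- `I` is an independent set of `G` contained in `S`, i.e. an independent set of `G[S]`. -/
def IsIndepSetIn {V : Type*} (G : SimpleGraph V) (S : Set V) (I : Finset V) : Prop :=
  ↑I ⊆ S ∧ ∀ u ∈ I, ∀ v ∈ I, u ≠ v → ¬ G.Adj u v

/-- `α(G[S]) ≤ k`. -/
def IndepLE {V : Type*} (G : SimpleGraph V) (S : Set V) (k : ℕ) : Prop :=
  ∀ I : Finset V, IsIndepSetIn G S I → I.card ≤ k

/-- The independence number of the tree decomposition is at most `k`. -/
def TreeDecomp.IndepNumLE {V : Type*} {G : SimpleGraph V} (td : TreeDecomp G) (k : ℕ) : Prop :=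
  ∀ t : td.ι, IndepLE G (td.bag t) k

/-- The tree-independence number of `G` is at most `k`. -/
def treeAlphaLE {V : Type*} (G : SimpleGraph V) (k : ℕ) : Prop :=
  ∃ td : TreeDecomp G, td.IndepNumLE k

/-- The tree-independence number of `G`. -/
noncomputable def treeAlpha {V : Type*} (G : SimpleGraph V) : ℕ :=
  sInf {k | treeAlphaLE G k}

/-- A layering of `G`, encoded by the function sending a vertex to the index of its layer. -/
def IsLayering {V : Type*} (G : SimpleGraph V) (L : V → ℕ) : Prop :=
  ∀ ⦃u v : V⦄, G.Adj u v → (L u : ℤ) ≤ (L v : ℤ) + 1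

/-- The layered tree-independence number of `G` is at most `k`. -/
def layeredTreeAlphaLE {V : Type*} (G : SimpleGraph V) (k : ℕ) : Prop :=
  ∃ (td : TreeDecomp G) (L : V → ℕ), IsLayering G L ∧
    ∀ (t : td.ι) (i : ℕ), IndepLE G (td.bag t ∩ {v | L v = i}) k

/-- The layered tree-independence number of `G`. -/
noncomputable def layeredTreeAlpha {V : Type*} (G : SimpleGraph V) : ℕ :=
  sInf {k | layeredTreeAlphaLE G k}

/-- The number of elements of the multiset `𝒞` containing `v` (with multiplicity). -/
noncomputable def coverCount {V : Type*} (𝒞 : Multiset (Set V)) (v : V) : ℕ :=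
  Multiset.countP (fun C => v ∈ C) 𝒞

/-- `𝒞` is a `β`-general cover: every vertex belongs to at least `β·|𝒞|` elements. -/
def IsGeneralCover {V : Type*} (β : ℝ) (𝒞 : Multiset (Set V)) : Prop :=
  𝒞 ≠ 0 ∧ ∀ v : V, β * (Multiset.card 𝒞 : ℝ) ≤ (coverCount 𝒞 v : ℝ)

/-- The intersection graph of an (indexed) family of sets. -/
def intersectionGraph {ι : Type*} {α : Type*} (D : ι → Set α) : SimpleGraph ι where
  Adj i j := i ≠ j ∧ (D i ∩ D j).Nonempty
  symm := by
    constructor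
    rintro i j ⟨hne, x, hx1, hx2⟩
    exact ⟨hne.symm, x, hx2, hx1⟩
  loopless := by
    constructor
    rintro i ⟨hne, -⟩
    exact hne rfl

/-- The `p`-th power of a graph. -/
def gpower {V : Type*} (G : SimpleGraph V) (p : ℕ) : SimpleGraph V where
  Adj u v := u ≠ v ∧ ∃ w : G.Walk u v, w.length ≤ p
  symm := by
    constructor
    rintro u v ⟨hne, w, hw⟩
    exact ⟨hne.symm, w.reverse, by simpa using hw⟩
  loopless := by
    constructor
    rintro u ⟨hne, -⟩
    exact hne rfl

/-- The axis-aligned closed hypercube of side length `r` with lower corner `x`. -/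
def cube (d : ℕ) (x : EuclideanSpace ℝ (Fin d)) (r : ℝ) : Set (EuclideanSpace ℝ (Fin d)) :=
  {y | ∀ i, x i ≤ y i ∧ y i ≤ x i + r}

/-- The size of an object: the side length of its smallest enclosing axis-aligned hypercube. -/
noncomputable def objSize (d : ℕ) (O : Set (EuclideanSpace ℝ (Fin d))) : ℝ :=
  sInf {r : ℝ | 0 ≤ r ∧ ∃ x, O ⊆ cube d x r}

/-- The collection `O` is `c`-fat. -/
def IsFat {ι : Type*} (d : ℕ) (c : ℝ) (O : ι → Set (EuclideanSpace ℝ (Fin d))) : Prop :=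
  ∀ r : ℝ, 0 < r → ∀ x : EuclideanSpace ℝ (Fin d), ∀ P : Finset ι,
    (∀ i ∈ P, ∀ j ∈ P, i ≠ j → Disjoint (O i) (O j)) →
    (∀ i ∈ P, (O i ∩ cube d x r).Nonempty ∧ r ≤ objSize d (O i)) →
    ∃ pts : Finset (EuclideanSpace ℝ (Fin d)),
      (pts.card : ℝ) ≤ c ∧ ∀ i ∈ P, ∃ p ∈ pts, p ∈ O i

/-- The `n`-dimensional grid graph of width `n`. -/
def gridGraphN (n : ℕ) : SimpleGraph (Fin n → Fin n) where
  Adj a b := ∑ i, ((a i : ℤ) - (b i : ℤ)).natAbs = 1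
  symm := by
    constructor
    intro a b h
    rw [← h]
    exact Finset.sum_congr rfl fun i _ => by omega
  loopless := by
    constructor
    intro a h
    simp at h

/-- The grid graph on `ℤ²`. -/
def latticeGraph : SimpleGraph (ℤ × ℤ) where
  Adj p q := (p.1 - q.1).natAbs + (p.2 - q.2).natAbs = 1
  symm := by
    constructor
    intro p q h
    omega
  loopless := by
    constructor
    intro p h
    simp at h

/-- `P` is (the vertex set of) a path on the integer grid: a finite nonempty subset of `ℤ²`
whose induced subgraph in the grid graph is a path. -/
def IsGridPath (P : Set (ℤ × ℤ)) : Prop :=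
  P.Finite ∧ P.Nonempty ∧ (latticeGraph.induce P).IsTree ∧
    ∀ v : P, ((latticeGraph.induce P).neighborSet v).ncard ≤ 2

/-!
Take a clique on the grid `Fin m × Fin m` and attach to each row and each column a leg: a path
with `ℓ + 1` vertices whose first vertex is joined to the whole row or column. The graph is
chordal (the bags are the clique and the edges of the legs), so its tree-independence number is
`1`. In its `2 (ℓ + 1)`-th power every vertex is adjacent to a fixed clique vertex, the free ends
of two row legs (or of two column legs) are at distance `2ℓ + 3`, and a row end and a column end
are at distance `2ℓ + 2` through their common cell. So a tree decomposition of the power has a bag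
containing all `m` row ends or all `m` column ends, an independent set, while a layering spreads
them over at most three layers; some layer of that bag has independence number at least `m / 3`.
-/

open SimpleGraph

namespace SimpleGraph

variable {ι : Type*} {T : SimpleGraph ι}

lemma Walk.apply_le_apply_add_length {f : ι → ℤ} (hf : ∀ ⦃a b⦄, T.Adj a b → f b ≤ f a + 1)
    {x y : ι} (w : T.Walk x y) : f y ≤ f x + w.length := by
  induction w with
  | nil => simp
  | cons hab w ih => have := hf hab; push_cast [Walk.length_cons]; omega

lemma Connected.exists_isPath_support_subset {S : Set ι} (hS : (T.induce S).Connected)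
    {a b : ι} (ha : a ∈ S) (hb : b ∈ S) :
    ∃ p : T.Walk a b, p.IsPath ∧ ∀ z ∈ p.support, z ∈ S := by
  obtain ⟨w⟩ := hS.preconnected ⟨a, ha⟩ ⟨b, hb⟩
  refine ⟨(w.map (Embedding.induce S).toHom).bypass, Walk.bypass_isPath _, fun z hz => ?_⟩
  obtain ⟨z', -, rfl⟩ := List.mem_map.mp
    (Walk.support_map _ w ▸ Walk.support_bypass_subset_support _ hz)
  exact z'.2

lemma Walk.eq_of_mem_support_of_dist_le {t r x : ι} (q : T.Walk t r)
    (hq : q.length ≤ T.dist t r) (hx : x ∈ q.support) (hd : T.dist t r ≤ T.dist x r) : x = t := by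
  have hsplit := congrArg Walk.length (q.take_spec hx)
  rw [Walk.length_append] at hsplit
  have := dist_le (q.dropUntil x hx)
  exact (Walk.eq_of_length_eq_zero (p := q.takeUntil x hx) (by omega)).symm

section Rooted

variable (hT : T.IsTree) (r : ι)
include hT

/-- The path from `w` to `t` inside `S` followed by a shortest path from `t` to `r` is the
unique path from `w` to `r`. -/
lemma IsTree.mem_support_of_forall_dist_le {S : Set ι} (hS : (T.induce S).Connected) {t : ι}
    (ht : t ∈ S) (htop : ∀ z ∈ S, T.dist t r ≤ T.dist z r) {w : ι} (hw : w ∈ S)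
    (W : T.Walk w r) : t ∈ W.support := by
  obtain ⟨P, hP, hPS⟩ := hS.exists_isPath_support_subset hw ht
  obtain ⟨Q, hQ, hQlen⟩ := (hT.connected t r).exists_path_of_dist
  have hPQ : (P.append Q).IsPath := by
    rw [Walk.isPath_def, Walk.support_append, List.nodup_append]
    refine ⟨hP.support_nodup, hQ.support_nodup.sublist (List.tail_sublist _), ?_⟩
    intro x hxP x' hxQ hxx'
    subst hxx'
    have hxt : x = t := Q.eq_of_mem_support_of_dist_le hQlen.le
      (List.mem_of_mem_tail hxQ) (htop x (hPS x hxP))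
    subst hxt
    have := hQ.support_nodup
    rw [← Walk.cons_tail_support, List.nodup_cons] at this
    exact this.1 hxQ
  have hmem : t ∈ (P.append Q).support :=
    (Walk.mem_support_append_iff _ _).mpr (Or.inl P.end_mem_support)
  rw [← (hT.existsUnique_path w r).unique W.bypass_isPath hPQ] at hmem
  exact W.support_bypass_subset_support hmem

lemma IsTree.mem_of_forall_dist_le {S S' : Set ι} (hS : (T.induce S).Connected)
    (hS' : (T.induce S').Connected) (hSS' : (S ∩ S').Nonempty) {t t' : ι}
    (ht : t ∈ S) (ht' : t' ∈ S') (htop' : ∀ z ∈ S', T.dist t' r ≤ T.dist z r)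
    (hle : T.dist t r ≤ T.dist t' r) : t' ∈ S := by
  obtain ⟨w, hwS, hwS'⟩ := hSS'
  obtain ⟨P, -, hPS⟩ := hS.exists_isPath_support_subset hwS ht
  obtain ⟨Q, -, hQlen⟩ := (hT.connected t r).exists_path_of_dist
  rcases (Walk.mem_support_append_iff _ _).mp
    (hT.mem_support_of_forall_dist_le r hS' ht' htop' hwS' (P.append Q)) with h | h
  · exact hPS t' h
  · rwa [Q.eq_of_mem_support_of_dist_le hQlen.le h hle]

end Rooted

def parentGraph (par : ι → ι) : SimpleGraph ι := .fromRel fun x y => par x = y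

lemma parentGraph_adj {par : ι → ι} {x y : ι} :
    (parentGraph par).Adj x y ↔ x ≠ y ∧ (par x = y ∨ par y = x) := by
  simp [parentGraph]

lemma connected_induce_parentGraph {par : ι → ι} {S : Set ι} {h : ι} (hh : h ∈ S)
    (hpar : ∀ x ∈ S, x ≠ h → par x = h) : ((parentGraph par).induce S).Connected :=
  Connected.of_isUniversal (v := ⟨h, hh⟩) fun w hw =>
    parentGraph_adj.mpr ⟨fun h' => hw (Subtype.ext h'),
      Or.inr (hpar w w.2 fun h' => hw (Subtype.ext h'.symm))⟩

section Rank

variable {par : ι → ι} {r : ι} (rank : ι → ℕ) (hr : par r = r)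
  (hrank : ∀ x, x ≠ r → rank (par x) < rank x)
include hrank

lemma parentGraph_adj_self {x : ι} (hx : x ≠ r) : (parentGraph par).Adj x (par x) :=
  parentGraph_adj.mpr ⟨fun h => (hrank x hx).ne (by rw [← h]), Or.inl rfl⟩

lemma reachable_parentGraph (x : ι) : (parentGraph par).Reachable x r := by
  by_cases hx : x = r
  · exact hx ▸ .rfl
  · have := hrank x hx
    exact (parentGraph_adj_self rank hrank hx).reachable.trans (reachable_parentGraph (par x))
termination_by rank x

include hr

/-- The edges are the pairs `s(x, par x)` with `x ≠ r`, one fewer than the vertices. -/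
theorem isTree_parentGraph [Finite ι] : (parentGraph par).IsTree := by
  rw [isTree_iff_connected_and_card]
  refine ⟨(connected_iff_exists_forall_reachable _).mpr
    ⟨r, fun x => (reachable_parentGraph rank hrank x).symm⟩, ?_⟩
  let e : {x // x ≠ r} → (parentGraph par).edgeSet := fun x =>
    ⟨s(x.1, par x.1), parentGraph_adj_self rank hrank x.2⟩
  have he : Function.Bijective e := by
    constructor
    · rintro ⟨x, hx⟩ ⟨y, hy⟩ hxy
      rcases Sym2.eq_iff.mp (congrArg Subtype.val hxy) with ⟨h, -⟩ | ⟨hxy, hyx⟩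
      · exact Subtype.ext h
      · dsimp only at hxy hyx
        have h1 := hrank x hx
        have h2 := hrank y hy
        rw [hyx] at h1
        rw [← hxy] at h2
        omega
    · rintro ⟨e', he'⟩
      induction e' using Sym2.ind with | _ x y => ?_
      obtain ⟨hne, hxy | hyx⟩ := parentGraph_adj.mp he'
      · refine ⟨⟨x, fun hx => hne ?_⟩, Subtype.ext (by simp [e, hxy])⟩
        rw [← hxy, hx, hr]
      · refine ⟨⟨y, fun hy => hne ?_⟩, Subtype.ext (by simp [e, hyx, Sym2.eq_swap])⟩
        rw [← hyx, hy, hr]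
  rw [← Nat.card_congr (Equiv.ofBijective e he), ← Finite.card_option,
    Nat.card_congr (Equiv.optionSubtypeNe r)]

end Rank

end SimpleGraph

namespace TreeDecomp

variable {V : Type*} {H : SimpleGraph V}

/-- Root the tree and take the vertex of `A ∪ B` whose subtree has the deepest top: that top
lies in the subtree of each of its neighbours. -/
theorem exists_bag_superset_of_forall_adj (td : TreeDecomp H) {A B : Finset V}
    (hA : A.Nonempty) (hAB : ∀ a ∈ A, ∀ b ∈ B, H.Adj a b) :
    ∃ t, (A : Set V) ⊆ td.bag t ∨ (B : Set V) ⊆ td.bag t := by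
  obtain ⟨r, -⟩ := td.mem_bag hA.choose
  let depth (t : td.ι) : ℕ := td.T.dist t r
  let top (v : V) : td.ι := Function.argminOn depth {t | v ∈ td.bag t} (td.mem_bag v)
  have htop_mem (v : V) : v ∈ td.bag (top v) := Function.argminOn_mem depth {t | v ∈ td.bag t} _
  have htop_le (v : V) (z : td.ι) (hz : v ∈ td.bag z) : depth (top v) ≤ depth z :=
    Function.argminOn_le depth {t | v ∈ td.bag t} hz
  have hshare {u v : V} (huv : H.Adj u v) (hle : depth (top u) ≤ depth (top v)) :
      u ∈ td.bag (top v) :=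
    td.isTree.mem_of_forall_dist_le r (td.bag_connected u) (td.bag_connected v)
      (td.edge_bag huv) (htop_mem u) (htop_mem v) (htop_le v) hle
  obtain ⟨v, hv, hvmax⟩ := (A ∪ B).exists_max_image (fun v => depth (top v))
    (hA.mono Finset.subset_union_left)
  refine ⟨top v, ?_⟩
  rcases Finset.mem_union.mp hv with hvA | hvB
  · exact Or.inr fun b hb =>
      hshare (hAB v hvA b hb).symm (hvmax b (Finset.mem_union_right _ hb))
  · exact Or.inl fun a ha => hshare (hAB a ha v hvB) (hvmax a (Finset.mem_union_left _ ha))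

end TreeDecomp

section IndependenceNumbers

variable {V : Type*} {G : SimpleGraph V}

lemma indepLE_one_of_isClique {S : Set V} (hS : G.IsClique S) : IndepLE G S 1 :=
  fun _ hI => Finset.card_le_one.mpr fun a ha b hb =>
    by_contra fun hab => hI.2 a ha b hb hab (hS (hI.1 ha) (hI.1 hb) hab)

lemma indepLE_mul_of_forall_layer {S : Set V} {L : V → ℕ} {J : Finset ℕ} {b : ℕ}
    (hSJ : ∀ v ∈ S, L v ∈ J) (hlayer : ∀ i, IndepLE G (S ∩ {v | L v = i}) b) :
    IndepLE G S (J.card * b) := by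
  intro I hI
  have hcover : I ⊆ J.biUnion fun i => I.filter (L · = i) := fun v hv =>
    Finset.mem_biUnion.mpr ⟨L v, hSJ v (hI.1 hv), Finset.mem_filter.mpr ⟨hv, rfl⟩⟩
  calc I.card ≤ ∑ i ∈ J, (I.filter (L · = i)).card :=
        (Finset.card_le_card hcover).trans Finset.card_biUnion_le
    _ ≤ ∑ _i ∈ J, b := Finset.sum_le_sum fun i _ => hlayer i _
        ⟨fun v hv => ⟨hI.1 (Finset.mem_filter.mp hv).1, (Finset.mem_filter.mp hv).2⟩,
          fun u hu v hv => hI.2 u (Finset.mem_filter.mp hu).1 v (Finset.mem_filter.mp hv).1⟩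
    _ = J.card * b := by rw [Finset.sum_const, smul_eq_mul]

lemma layeredTreeAlphaLE_of_treeAlphaLE {k : ℕ} (h : treeAlphaLE G k) :
    layeredTreeAlphaLE G k := by
  obtain ⟨td, htd⟩ := h
  exact ⟨td, fun _ => 0, fun _ _ _ => by simp, fun t _ I hI =>
    htd t I ⟨fun _ hv => (hI.1 hv).1, hI.2⟩⟩

variable (G) in
def TreeDecomp.single : TreeDecomp G where
  ι := Unit
  fin := inferInstance
  T := ⊥
  isTree := .of_subsingleton
  bag _ := Set.univ
  mem_bag _ := ⟨(), trivial⟩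
  edge_bag _ _ _ := ⟨(), trivial, trivial⟩
  bag_connected v := by
    have : Nonempty {_t : Unit | v ∈ (Set.univ : Set V)} := ⟨⟨(), trivial⟩⟩
    exact .of_subsingleton

variable (G) in
lemma treeAlphaLE_card [Fintype V] : treeAlphaLE G (Fintype.card V) :=
  ⟨.single G, fun _ I _ => I.card_le_univ⟩

lemma treeAlpha_eq_one [Nonempty V] (h : treeAlphaLE G 1) : treeAlpha G = 1 := by
  refine le_antisymm (Nat.sInf_le h) (le_csInf ⟨1, h⟩ fun k ⟨td, htd⟩ => ?_)
  obtain ⟨v⟩ := ‹Nonempty V›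
  obtain ⟨t, ht⟩ := td.mem_bag v
  simpa using htd t {v} ⟨by simpa using ht, by simp_all⟩

lemma indepLE_iff_isIndepSet {S : Set V} {k : ℕ} :
    IndepLE G S k ↔ ∀ I : Finset V, (I : Set V) ⊆ S → G.IsIndepSet I → I.card ≤ k :=
  ⟨fun h I hIS hI => h I ⟨hIS, fun _ hu _ hv huv => hI hu hv huv⟩,
    fun h I hI => h I hI.1 fun u hu v hv huv => hI.2 u hu v hv huv⟩

end IndependenceNumbers

/-- A universal vertex confines every layering to three consecutive layers, while two
independent sets complete to each other force one of them into a single bag. -/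
theorem min_card_le_three_mul_layeredTreeAlpha {V : Type*} [Fintype V] {H : SimpleGraph V}
    {c : V} (hc : ∀ v, v ≠ c → H.Adj v c) {A B : Finset V} (hA : H.IsIndepSet A)
    (hB : H.IsIndepSet B) (hAB : ∀ a ∈ A, ∀ b ∈ B, H.Adj a b) :
    min A.card B.card ≤ 3 * layeredTreeAlpha H := by
  rcases A.eq_empty_or_nonempty with rfl | hA0
  · simp
  obtain ⟨td, L, hL, hbags⟩ : layeredTreeAlphaLE H (layeredTreeAlpha H) :=
    Nat.sInf_mem (s := {k | layeredTreeAlphaLE H k})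
      ⟨_, layeredTreeAlphaLE_of_treeAlphaLE (treeAlphaLE_card H)⟩
  have hlayer (v : V) : L v ∈ ({L c - 1, L c, L c + 1} : Finset ℕ) := by
    by_cases hv : v = c
    · simp [hv]
    · have := hL (hc v hv)
      have := hL (hc v hv).symm
      simp only [Finset.mem_insert, Finset.mem_singleton]
      omega
  have hbag (t : td.ι) : IndepLE H (td.bag t) (3 * layeredTreeAlpha H) := fun I hI =>
    (indepLE_mul_of_forall_layer (fun v _ => hlayer v) (hbags t) I hI).trans
      (Nat.mul_le_mul_right _ Finset.card_le_three)
  obtain ⟨t, hAt | hBt⟩ := td.exists_bag_superset_of_forall_adj hA0 hAB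
  · exact (min_le_left _ _).trans (indepLE_iff_isIndepSet.mp (hbag t) A hAt hA)
  · exact (min_le_right _ _).trans (indepLE_iff_isIndepSet.mp (hbag t) B hBt hB)

def cliqueWithLegs {K P : Type*} (att : P → Set K) (ℓ : ℕ) : SimpleGraph (K ⊕ P × Fin (ℓ + 1)) :=
  .fromRel fun
    | .inl _, .inl _ => True
    | .inr (p, i), .inl c => i.val = 0 ∧ c ∈ att p
    | .inr (p, i), .inr (q, j) => p = q ∧ j.val = i.val + 1
    | .inl _, .inr _ => False

namespace cliqueWithLegs

variable {K : Type*} {P : Type} {att : P → Set K} {ℓ : ℕ}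

@[simp]
lemma adj_inl_inl {c c' : K} :
    (cliqueWithLegs att ℓ).Adj (.inl c) (.inl c') ↔ c ≠ c' := by
  simp [cliqueWithLegs]

@[simp]
lemma adj_inr_inl {p : P} {i : Fin (ℓ + 1)} {c : K} :
    (cliqueWithLegs att ℓ).Adj (.inr (p, i)) (.inl c) ↔ i.val = 0 ∧ c ∈ att p := by
  simp [cliqueWithLegs]

@[simp]
lemma adj_inl_inr {p : P} {i : Fin (ℓ + 1)} {c : K} :
    (cliqueWithLegs att ℓ).Adj (.inl c) (.inr (p, i)) ↔ i.val = 0 ∧ c ∈ att p := by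
  simp [cliqueWithLegs]

@[simp]
lemma adj_inr_inr {p q : P} {i j : Fin (ℓ + 1)} :
    (cliqueWithLegs att ℓ).Adj (.inr (p, i)) (.inr (q, j)) ↔
      p = q ∧ (j.val = i.val + 1 ∨ i.val = j.val + 1) := by
  simp only [cliqueWithLegs, fromRel_adj, ne_eq, Sum.inr.injEq, Prod.mk.injEq, Fin.ext_iff]
  grind

section TreeDecomposition

def decompParent : Option (P × Fin (ℓ + 1)) → Option (P × Fin (ℓ + 1))
  | none => none
  | some (p, i) => if h : i.val = 0 then none else some (p, ⟨i.val - 1, by omega⟩)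

lemma decompParent_of_val_eq_zero {p : P} {i : Fin (ℓ + 1)} (hi : i.val = 0) :
    decompParent (some (p, i)) = none := by
  simp [decompParent, hi]

lemma decompParent_of_val_eq_succ {p : P} {i j : Fin (ℓ + 1)} (hij : j.val = i.val + 1) :
    decompParent (some (p, j)) = some (p, i) := by
  simp only [decompParent, dif_neg (show j.val ≠ 0 by omega), Option.some.injEq, Prod.mk.injEq,
    true_and]
  exact Fin.ext (by simp; omega)

variable (att) in
def decompBag : Option (P × Fin (ℓ + 1)) → Set (K ⊕ P × Fin (ℓ + 1))
  | none => Set.range .inl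
  | some (p, i) => {v | v = .inr (p, i) ∨ (i.val = 0 ∧ ∃ c ∈ att p, v = .inl c) ∨
      ∃ j : Fin (ℓ + 1), j.val + 1 = i.val ∧ v = .inr (p, j)}

lemma isTree_decomp [Finite P] : (parentGraph (decompParent (P := P) (ℓ := ℓ))).IsTree :=
  isTree_parentGraph (r := none) (fun x => x.elim 0 fun x => x.2.val + 1) rfl <| by
    rintro (_ | ⟨p, i⟩) hx
    · exact absurd rfl hx
    · simp only [decompParent]
      split_ifs <;> simp only [Option.elim] <;> omega

lemma isClique_decompBag (x : Option (P × Fin (ℓ + 1))) :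
    (cliqueWithLegs att ℓ).IsClique (decompBag att x) := by
  rcases x with _ | ⟨p, i⟩
  · rintro _ ⟨c, rfl⟩ _ ⟨c', rfl⟩ hne
    exact adj_inl_inl.mpr fun h => hne (congrArg _ h)
  · rintro u (rfl | ⟨hi, c, hc, rfl⟩ | ⟨j, hj, rfl⟩)
      v (rfl | ⟨hi', c', hc', rfl⟩ | ⟨j', hj', rfl⟩) hne
    all_goals grind [adj_inl_inl, adj_inr_inl, adj_inl_inr, adj_inr_inr, Fin.ext_iff]

variable (att ℓ) in
def decomp [Fintype P] : TreeDecomp (cliqueWithLegs att ℓ) where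
  ι := Option (P × Fin (ℓ + 1))
  fin := inferInstance
  T := parentGraph decompParent
  isTree := isTree_decomp
  bag := decompBag att
  mem_bag := by
    rintro (c | x)
    · exact ⟨none, c, rfl⟩
    · exact ⟨some x, Or.inl rfl⟩
  edge_bag := by
    rintro (c | ⟨p, i⟩) (c' | ⟨q, j⟩) h
    · exact ⟨none, ⟨c, rfl⟩, ⟨c', rfl⟩⟩
    · obtain ⟨hj, hc⟩ := adj_inl_inr.mp h
      exact ⟨some (q, j), Or.inr (Or.inl ⟨hj, c, hc, rfl⟩), Or.inl rfl⟩
    · obtain ⟨hi, hc⟩ := adj_inr_inl.mp h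
      exact ⟨some (p, i), Or.inl rfl, Or.inr (Or.inl ⟨hi, c', hc, rfl⟩)⟩
    · obtain ⟨rfl, hij | hji⟩ := adj_inr_inr.mp h
      · exact ⟨some (p, j), Or.inr (Or.inr ⟨i, hij.symm, rfl⟩), Or.inl rfl⟩
      · exact ⟨some (p, i), Or.inl rfl, Or.inr (Or.inr ⟨j, hji.symm, rfl⟩)⟩
  bag_connected := by
    rintro (c | ⟨p, i⟩)
    · refine connected_induce_parentGraph (h := none) ⟨c, rfl⟩ ?_
      rintro (_ | ⟨q, j⟩) hx hne
      · exact absurd rfl hne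
      · rcases hx with hx | ⟨hj, -⟩ | ⟨_, -, hx⟩
        · exact absurd hx (by simp)
        · exact decompParent_of_val_eq_zero hj
        · exact absurd hx (by simp)
    · refine connected_induce_parentGraph (h := some (p, i)) (Or.inl rfl) ?_
      rintro (_ | ⟨q, j⟩) hx hne
      · exact absurd hx (by simp [decompBag])
      · rcases hx with hx | ⟨-, _, -, hx⟩ | ⟨i', hi', hx⟩
        · exact absurd (by rw [Sum.inr_injective hx]) hne
        · exact absurd hx (by simp)
        · obtain ⟨rfl, rfl⟩ := Prod.ext_iff.mp (Sum.inr_injective hx)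
          exact decompParent_of_val_eq_succ hi'.symm

lemma treeAlphaLE_one [Fintype P] : treeAlphaLE (cliqueWithLegs att ℓ) 1 :=
  ⟨decomp att ℓ, fun x => indepLE_one_of_isClique (isClique_decompBag x)⟩

end TreeDecomposition

lemma exists_walk_inr_zero (p : P) (i : Fin (ℓ + 1)) :
    ∃ w : (cliqueWithLegs att ℓ).Walk (.inr (p, i)) (.inr (p, 0)), w.length = i.val := by
  obtain ⟨i, hi⟩ := i
  induction i with
  | zero => exact ⟨.nil, rfl⟩
  | succ n ih =>
    obtain ⟨w, hw⟩ := ih (by omega)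
    exact ⟨.cons (adj_inr_inr.mpr ⟨rfl, Or.inr rfl⟩) w, by simp [hw]⟩

lemma exists_walk_inl {p : P} (i : Fin (ℓ + 1)) {c : K} (hc : c ∈ att p) :
    ∃ w : (cliqueWithLegs att ℓ).Walk (.inr (p, i)) (.inl c), w.length = i.val + 1 := by
  obtain ⟨w, hw⟩ := exists_walk_inr_zero (att := att) p i
  exact ⟨w.concat (adj_inr_inl.mpr ⟨rfl, hc⟩), by simp [hw]⟩

lemma gpower_adj_inl (hatt : ∀ p, (att p).Nonempty) {k : ℕ} (hk : ℓ + 2 ≤ k)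
    {v : K ⊕ P × Fin (ℓ + 1)} {c : K} (hv : v ≠ .inl c) :
    (gpower (cliqueWithLegs att ℓ) k).Adj v (.inl c) := by
  refine ⟨hv, ?_⟩
  rcases v with c' | ⟨p, i⟩
  · exact ⟨(adj_inl_inl.mpr fun h => hv (congrArg _ h)).toWalk, by simp; omega⟩
  obtain ⟨c', hc'⟩ := hatt p
  obtain ⟨w, hw⟩ := exists_walk_inl i hc'
  by_cases hcc' : c' = c
  · exact ⟨hcc' ▸ w, by subst hcc'; simp only [hw]; omega⟩
  · exact ⟨w.concat (adj_inl_inl.mpr hcc'), by simp only [Walk.length_concat, hw]; omega⟩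

lemma gpower_adj_last {p q : P} (hpq : p ≠ q) {c : K} (hcp : c ∈ att p) (hcq : c ∈ att q) :
    (gpower (cliqueWithLegs att ℓ) (2 * (ℓ + 1))).Adj (.inr (p, Fin.last ℓ))
      (.inr (q, Fin.last ℓ)) := by
  obtain ⟨w, hw⟩ := exists_walk_inl (Fin.last ℓ) hcp
  obtain ⟨w', hw'⟩ := exists_walk_inl (Fin.last ℓ) hcq
  refine ⟨fun h => hpq (congrArg Prod.fst (Sum.inr_injective h)), w.append w'.reverse, ?_⟩
  simp only [Walk.length_append, Walk.length_reverse, hw, hw', Fin.val_last]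
  omega

variable (att ℓ) in
/-- `1`-Lipschitz and zero at `(p, ℓ)`, hence a lower bound for the distance from `(p, ℓ)`. -/
noncomputable def potential (p : P) : K ⊕ P × Fin (ℓ + 1) → ℤ
  | .inl c => if c ∈ att p then ℓ + 1 else ℓ + 2
  | .inr (q, i) =>
      if q = p then ℓ - i else if Disjoint (att q) (att p) then ℓ + 3 + i else ℓ + 2 + i

lemma potential_le_add_one (p : P) {a b : K ⊕ P × Fin (ℓ + 1)}
    (hab : (cliqueWithLegs att ℓ).Adj a b) : potential att ℓ p b ≤ potential att ℓ p a + 1 := by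
  rcases a with c | ⟨q, i⟩ <;> rcases b with c' | ⟨q', j⟩ <;>
    simp only [adj_inl_inl, adj_inr_inl, adj_inl_inr, adj_inr_inr] at hab <;>
    simp only [potential] <;> split_ifs <;> grind

lemma not_gpower_adj_last {p q : P} (hpq : Disjoint (att p) (att q)) :
    ¬ (gpower (cliqueWithLegs att ℓ) (2 * (ℓ + 1))).Adj (.inr (p, Fin.last ℓ))
      (.inr (q, Fin.last ℓ)) := by
  rintro ⟨hne, w, hw⟩
  have hqp : q ≠ p := fun h => hne (h ▸ rfl)
  have := w.apply_le_apply_add_length fun _ _ => potential_le_add_one p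
  simp only [potential, hqp, hpq.symm, if_true, if_false, Fin.val_last] at this
  omega

lemma isIndepSet_image_last [DecidableEq K] [DecidableEq P] {α : Type*} {f : α → P}
    (hf : Pairwise fun a b => Disjoint (att (f a)) (att (f b))) (s : Finset α) :
    (gpower (cliqueWithLegs att ℓ) (2 * (ℓ + 1))).IsIndepSet
      ↑(s.image fun a => (.inr (f a, Fin.last ℓ) : K ⊕ P × Fin (ℓ + 1))) := by
  simp only [Finset.coe_image]
  rintro _ ⟨a, -, rfl⟩ _ ⟨b, -, rfl⟩ hne
  exact not_gpower_adj_last (hf fun h => hne (h ▸ rfl))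

end cliqueWithLegs

def gridLine (m : ℕ) : Fin m ⊕ Fin m → Set (Fin m × Fin m)
  | .inl a => {c | c.1 = a}
  | .inr b => {c | c.2 = b}

lemma gridLine_nonempty {m : ℕ} [NeZero m] : ∀ p, (gridLine m p).Nonempty
  | .inl a => ⟨(a, 0), rfl⟩
  | .inr b => ⟨(0, b), rfl⟩

lemma pairwise_disjoint_gridLine_inl (m : ℕ) :
    Pairwise fun a b => Disjoint (gridLine m (.inl a)) (gridLine m (.inl b)) :=
  fun _ _ hab => Set.disjoint_left.mpr fun _ ha hb => hab (ha.symm.trans hb)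

lemma pairwise_disjoint_gridLine_inr (m : ℕ) :
    Pairwise fun a b => Disjoint (gridLine m (.inr a)) (gridLine m (.inr b)) :=
  fun _ _ hab => Set.disjoint_left.mpr fun _ ha hb => hab (ha.symm.trans hb)

theorem le_three_mul_layeredTreeAlpha_gpower_gridLine (m ℓ : ℕ) [NeZero m] :
    m ≤ 3 * layeredTreeAlpha (gpower (cliqueWithLegs (gridLine m) ℓ) (2 * (ℓ + 1))) := by
  let lasts (side : Fin m → Fin m ⊕ Fin m) :=
    Finset.univ.image fun a => (.inr (side a, Fin.last ℓ) : Fin m × Fin m ⊕ _)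
  have hcard (side) (hside : side.Injective) : (lasts side).card = m := by
    rw [Finset.card_image_of_injective _ fun a b h => hside (by simpa using h),
      Finset.card_univ, Fintype.card_fin]
  have hcross : ∀ a ∈ lasts .inl, ∀ b ∈ lasts .inr,
      (gpower (cliqueWithLegs (gridLine m) ℓ) (2 * (ℓ + 1))).Adj a b := by
    simp only [lasts, Finset.mem_image, Finset.mem_univ, true_and]
    rintro _ ⟨a, rfl⟩ _ ⟨b, rfl⟩
    exact cliqueWithLegs.gpower_adj_last Sum.inl_ne_inr (c := (a, b)) rfl rfl
  have key := min_card_le_three_mul_layeredTreeAlpha (c := .inl (0, 0))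
    (fun _ hv => cliqueWithLegs.gpower_adj_inl gridLine_nonempty (by omega) hv)
    (cliqueWithLegs.isIndepSet_image_last (pairwise_disjoint_gridLine_inl m) Finset.univ)
    (cliqueWithLegs.isIndepSet_image_last (pairwise_disjoint_gridLine_inr m) Finset.univ) hcross
  rwa [hcard _ Sum.inl_injective, hcard _ Sum.inr_injective, min_self] at key

/-- For every even `k ≥ 2` and every `n`, there is a graph `G` with
tree-independence number `1` (hence layered tree-independence number at most `1`) whose `k`-th
power has layered tree-independence number at least `n`. -/
theorem stmt4 (k : ℕ) (hk : 2 ≤ k) (hke : Even k) (n : ℕ) :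
    ∃ (V : Type) (_ : Fintype V) (G : SimpleGraph V),
      treeAlpha G = 1 ∧ layeredTreeAlpha G ≤ 1 ∧ n ≤ layeredTreeAlpha (gpower G k) := by
  obtain ⟨ℓ, rfl⟩ : ∃ ℓ, k = 2 * (ℓ + 1) := ⟨k / 2 - 1, by obtain ⟨s, rfl⟩ := hke; omega⟩
  have hG : treeAlphaLE (cliqueWithLegs (gridLine (3 * n + 1)) ℓ) 1 :=
    cliqueWithLegs.treeAlphaLE_one
  refine ⟨_, inferInstance, _, treeAlpha_eq_one hG,
    Nat.sInf_le (layeredTreeAlphaLE_of_treeAlphaLE hG), ?_⟩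
  have := le_three_mul_layeredTreeAlpha_gpower_gridLine (3 * n + 1) ℓ
  omega
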